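/- arXiv:1809.07511 — 3 statements merged into one kernel-verified Lean document; each statement's English description precedes it below -/
import Mathlib

section
/- Let n ≥ 1, let a_0(n), a_1(n) be real numbers with 2a_0(n) + a_1(n) = 1, let f : [0,1] → ℝ be continuous, and let x ∈ [0,1]. Then |B_n^{M,1}(f;x) − f(x)| ≤ |B_n(f;x) − f(x)| + |(1 + a_1(n))(1/2 − x)| · ω₁(f; 1/n). -/
open scoped BigOperators
open Set Filter MeasureTheory

/-- Bernstein fundamental function `p_{n,k}` (vanishes for `k > n` since `choose = 0`). -/
noncomputable def bp (n k : ℕ) (x : ℝ) : ℝ :=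
  (n.choose k : ℝ) * x ^ k * (1 - x) ^ (n - k)

/-- Bernstein fundamental function with integer index, vanishing for negative `k`. -/
noncomputable def bpz (n : ℕ) (k : ℤ) (x : ℝ) : ℝ :=
  if 0 ≤ k then bp n k.toNat x else 0

/-- The classical Bernstein operator `B_n`. -/
noncomputable def Bern (n : ℕ) (f : ℝ → ℝ) (x : ℝ) : ℝ :=
  ∑ k ∈ Finset.range (n + 1), bp n k x * f (k / n)

/-- Modified fundamental function `p_{n,k}^{M,1}` with `a(x,n) = a1*x + a0`. -/
noncomputable def bpM1 (a0 a1 : ℝ) (n k : ℕ) (x : ℝ) : ℝ :=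
  (a1 * x + a0) * bp (n - 1) k x + (a1 * (1 - x) + a0) * bpz (n - 1) ((k : ℤ) - 1) x

/-- The modified Bernstein operator `B_n^{M,1}`. -/
noncomputable def BernM1 (a0 a1 : ℝ) (n : ℕ) (f : ℝ → ℝ) (x : ℝ) : ℝ :=
  ∑ k ∈ Finset.range (n + 1), bpM1 a0 a1 n k x * f (k / n)

/-- Second modified fundamental function `p_{n,k}^{M,2}`. -/
noncomputable def bpM2 (n k : ℕ) (x : ℝ) : ℝ :=
  ((n : ℝ) / 2 * x ^ 2 + (-1 - (n : ℝ) / 2) * x + 1) * bp (n - 2) k x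
    + (n : ℝ) * x * (1 - x) * bpz (n - 2) ((k : ℤ) - 1) x
    + ((n : ℝ) / 2 * x ^ 2 + (-(n : ℝ) / 2 + 1) * x) * bpz (n - 2) ((k : ℤ) - 2) x

/-- The second modified Bernstein operator `B_n^{M,2}`. -/
noncomputable def BernM2 (n : ℕ) (f : ℝ → ℝ) (x : ℝ) : ℝ :=
  ∑ k ∈ Finset.range (n + 1), bpM2 n k x * f (k / n)

/-- The Kantorovich operator `K_n`. -/
noncomputable def Kan (n : ℕ) (f : ℝ → ℝ) (x : ℝ) : ℝ :=
  ((n : ℝ) + 1) * ∑ k ∈ Finset.range (n + 1),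
    bp n k x * ∫ t in ((k : ℝ) / (n + 1))..(((k : ℝ) + 1) / (n + 1)), f t

/-- The modified Kantorovich operator `K_n^{M,1}`. -/
noncomputable def KanM1 (a0 a1 : ℝ) (n : ℕ) (f : ℝ → ℝ) (x : ℝ) : ℝ :=
  ((n : ℝ) + 1) * ∑ k ∈ Finset.range (n + 1),
    bpM1 a0 a1 n k x * ∫ t in ((k : ℝ) / (n + 1))..(((k : ℝ) + 1) / (n + 1)), f t

/-- The Durrmeyer operator `D_n`. -/
noncomputable def Dur (n : ℕ) (f : ℝ → ℝ) (x : ℝ) : ℝ :=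
  ((n : ℝ) + 1) * ∑ k ∈ Finset.range (n + 1),
    bp n k x * ∫ t in (0:ℝ)..1, bp n k t * f t

/-- The modified Durrmeyer operator `D_n^{M,1}`. -/
noncomputable def DurM1 (a0 a1 : ℝ) (n : ℕ) (f : ℝ → ℝ) (x : ℝ) : ℝ :=
  ((n : ℝ) + 1) * ∑ k ∈ Finset.range (n + 1),
    bpM1 a0 a1 n k x * ∫ t in (0:ℝ)..1, bp n k t * f t

/-- The genuine Bernstein–Durrmeyer operator `U_n`. -/
noncomputable def Gen (n : ℕ) (f : ℝ → ℝ) (x : ℝ) : ℝ :=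
  (1 - x) ^ n * f 0 + x ^ n * f 1 +
    ((n : ℝ) - 1) * ∑ k ∈ Finset.Icc 1 (n - 1),
      bp n k x * ∫ t in (0:ℝ)..1, bp (n - 2) (k - 1) t * f t

/-- The modified genuine Bernstein–Durrmeyer operator `U_n^{M,1}`. -/
noncomputable def GenM1 (a0 a1 : ℝ) (n : ℕ) (f : ℝ → ℝ) (x : ℝ) : ℝ :=
  (a1 * x + a0) * (1 - x) ^ (n - 1) * f 0 + (a1 * (1 - x) + a0) * x ^ (n - 1) * f 1 +
    ((n : ℝ) - 1) * ∑ k ∈ Finset.Icc 1 (n - 1),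
      bpM1 a0 a1 n k x * ∫ t in (0:ℝ)..1, bp (n - 2) (k - 1) t * f t

/-- First modulus of continuity on `[0,1]`. -/
noncomputable def omega1 (f : ℝ → ℝ) (δ : ℝ) : ℝ :=
  sSup {y | ∃ s t : ℝ, s ∈ Icc (0:ℝ) 1 ∧ t ∈ Icc (0:ℝ) 1 ∧ |s - t| ≤ δ ∧ y = |f s - f t|}

/-- Second modulus of smoothness on `[0,1]`. -/
noncomputable def omega2 (f : ℝ → ℝ) (δ : ℝ) : ℝ :=
  sSup {y | ∃ t h : ℝ, 0 < h ∧ h ≤ δ ∧ t - h ∈ Icc (0:ℝ) 1 ∧ t + h ∈ Icc (0:ℝ) 1 ∧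
    y = |f (t + h) - 2 * f t + f (t - h)|}

/-- Sup norm on `[0,1]`. -/
noncomputable def supNorm (g : ℝ → ℝ) : ℝ :=
  sSup {y | ∃ t ∈ Icc (0:ℝ) 1, y = |g t|}

/-! By Pascal's rule `p_{n,k} = (1 - x) p_{n-1,k} + x p_{n-1,k-1}`, the constraint
`2 a₀ + a₁ = 1` gives `p^{M,1}_{n,k} - p_{n,k} = (1 + a₁)(x - 1/2)(p_{n-1,k} - p_{n-1,k-1})`.
Summing by parts, `B_n^{M,1} f - B_n f = (1 + a₁)(x - 1/2) ∑ⱼ p_{n-1,j}(x) (f(j/n) - f((j+1)/n))`,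
a convex combination of increments of `f` over steps of length `1/n`, each bounded by `ω₁(f; 1/n)`. -/

lemma omega1_bddAbove {f : ℝ → ℝ} (hf : ContinuousOn f (Icc 0 1)) (δ : ℝ) :
    BddAbove {y | ∃ s t : ℝ, s ∈ Icc (0:ℝ) 1 ∧ t ∈ Icc (0:ℝ) 1 ∧ |s - t| ≤ δ ∧ y = |f s - f t|} := by
  obtain ⟨C, hC⟩ := isCompact_Icc.exists_bound_of_continuousOn hf
  refine ⟨C + C, ?_⟩
  rintro y ⟨s, t, hs, ht, -, rfl⟩
  exact (abs_sub _ _).trans (add_le_add (hC s hs) (hC t ht))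

lemma abs_sub_le_omega1 {f : ℝ → ℝ} (hf : ContinuousOn f (Icc 0 1)) {δ s t : ℝ}
    (hs : s ∈ Icc (0:ℝ) 1) (ht : t ∈ Icc (0:ℝ) 1) (hst : |s - t| ≤ δ) :
    |f s - f t| ≤ omega1 f δ :=
  le_csSup (omega1_bddAbove hf δ) ⟨s, t, hs, ht, hst, rfl⟩

lemma bp_nonneg (n k : ℕ) {x : ℝ} (hx : x ∈ Icc (0:ℝ) 1) : 0 ≤ bp n k x := by
  obtain ⟨hx0, hx1⟩ := hx
  have : 0 ≤ 1 - x := sub_nonneg.2 hx1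
  unfold bp
  positivity

lemma sum_range_succ_bp (n : ℕ) (x : ℝ) : ∑ k ∈ Finset.range (n + 1), bp n k x = 1 := by
  have h := add_pow x (1 - x) n
  rw [add_sub_cancel, one_pow] at h
  rw [h]
  exact Finset.sum_congr rfl fun k _ => by unfold bp; ring

lemma bp_of_lt {n k : ℕ} (h : n < k) (x : ℝ) : bp n k x = 0 := by
  simp [bp, Nat.choose_eq_zero_of_lt h]

lemma bpz_natCast (n k : ℕ) (x : ℝ) : bpz n k x = bp n k x := by
  simp [bpz]

lemma bpz_of_neg {n : ℕ} {k : ℤ} (hk : k < 0) (x : ℝ) : bpz n k x = 0 :=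
  if_neg hk.not_ge

lemma bp_succ_succ (n k : ℕ) (x : ℝ) :
    bp (n + 1) (k + 1) x = (1 - x) * bp n (k + 1) x + x * bp n k x := by
  rcases lt_or_ge k n with h | h
  · obtain ⟨d, rfl⟩ := Nat.exists_eq_add_of_lt h
    simp only [bp, Nat.choose_succ_succ', Nat.cast_add,
      show k + d + 1 + 1 - (k + 1) = d + 1 by omega, show k + d + 1 - (k + 1) = d by omega,
      show k + d + 1 - k = d + 1 by omega]
    ring
  · simp only [bp, Nat.choose_succ_succ', Nat.cast_add,
      Nat.choose_eq_zero_of_lt (by omega : n < k + 1), show n + 1 - (k + 1) = n - k by omega]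
    ring

lemma bp_succ (n k : ℕ) (x : ℝ) :
    bp (n + 1) k x = (1 - x) * bp n k x + x * bpz n ((k : ℤ) - 1) x := by
  rcases k with _ | k
  · rw [Nat.cast_zero, zero_sub, bpz_of_neg (by norm_num)]
    simp [bp, pow_succ, mul_comm]
  · simpa [bpz_natCast] using bp_succ_succ n k x

lemma bpM1_succ_sub_bp_succ {a0 a1 : ℝ} (ha : 2 * a0 + a1 = 1) (n k : ℕ) (x : ℝ) :
    bpM1 a0 a1 (n + 1) k x - bp (n + 1) k x =
      (1 + a1) * (x - 1 / 2) * (bp n k x - bpz n ((k : ℤ) - 1) x) := by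
  rw [bpM1, bp_succ, Nat.add_sub_cancel]
  linear_combination (bp n k x + bpz n ((k : ℤ) - 1) x) / 2 * ha

lemma sum_range_bp_sub_bpz_mul (n : ℕ) (x : ℝ) (g : ℕ → ℝ) :
    ∑ k ∈ Finset.range (n + 2), (bp n k x - bpz n ((k : ℤ) - 1) x) * g k =
      ∑ j ∈ Finset.range (n + 1), bp n j x * (g j - g (j + 1)) := by
  have upper : ∑ k ∈ Finset.range (n + 2), bp n k x * g k =
      ∑ j ∈ Finset.range (n + 1), bp n j x * g j := by
    rw [Finset.sum_range_succ, bp_of_lt n.lt_succ_self, zero_mul, add_zero]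
  have lower : ∑ k ∈ Finset.range (n + 2), bpz n ((k : ℤ) - 1) x * g k =
      ∑ j ∈ Finset.range (n + 1), bp n j x * g (j + 1) := by
    rw [Finset.sum_range_succ', bpz_of_neg (by norm_num), zero_mul, add_zero]
    push_cast
    simp only [add_sub_cancel_right, bpz_natCast]
  simp only [sub_mul, mul_sub, Finset.sum_sub_distrib, upper, lower]

lemma BernM1_succ_sub_Bern_succ {a0 a1 : ℝ} (ha : 2 * a0 + a1 = 1) (n : ℕ) (f : ℝ → ℝ)
    (x : ℝ) : BernM1 a0 a1 (n + 1) f x - Bern (n + 1) f x =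
      (1 + a1) * (x - 1 / 2) * ∑ j ∈ Finset.range (n + 1),
        bp n j x * (f (j / (n + 1 : ℕ)) - f ((j + 1 : ℕ) / (n + 1 : ℕ))) := by
  rw [BernM1, Bern, ← Finset.sum_sub_distrib,
    ← sum_range_bp_sub_bpz_mul n x fun k => f (k / (n + 1 : ℕ)), Finset.mul_sum]
  refine Finset.sum_congr rfl fun k _ => ?_
  rw [← sub_mul, bpM1_succ_sub_bp_succ ha, mul_assoc]

lemma abs_sum_bp_mul_sub_le_omega1 {f : ℝ → ℝ} (hf : ContinuousOn f (Icc 0 1)) (n : ℕ)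
    {x : ℝ} (hx : x ∈ Icc (0:ℝ) 1) :
    |∑ j ∈ Finset.range (n + 1),
        bp n j x * (f (j / (n + 1 : ℕ)) - f ((j + 1 : ℕ) / (n + 1 : ℕ)))| ≤
      omega1 f (1 / (n + 1 : ℕ)) := by
  have grid_mem : ∀ i ≤ n + 1, (i / (n + 1 : ℕ) : ℝ) ∈ Icc (0:ℝ) 1 := fun i hi =>
    ⟨by positivity, div_le_one_of_le₀ (by exact_mod_cast hi) (by positivity)⟩
  have step : ∀ j ∈ Finset.range (n + 1),
      |f (j / (n + 1 : ℕ)) - f ((j + 1 : ℕ) / (n + 1 : ℕ))| ≤ omega1 f (1 / (n + 1 : ℕ)) := by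
    intro j hj
    have hj := Finset.mem_range.1 hj
    refine abs_sub_le_omega1 hf (grid_mem j hj.le) (grid_mem (j + 1) hj) ?_
    rw [div_sub_div_same, abs_div, Nat.cast_succ, sub_add_cancel_left, abs_neg, abs_one,
      Nat.abs_cast]
  calc _ ≤ ∑ j ∈ Finset.range (n + 1),
        bp n j x * |f (j / (n + 1 : ℕ)) - f ((j + 1 : ℕ) / (n + 1 : ℕ))| := by
        refine (Finset.abs_sum_le_sum_abs _ _).trans_eq (Finset.sum_congr rfl fun j _ => ?_)
        rw [abs_mul, abs_of_nonneg (bp_nonneg n j hx)]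
    _ ≤ ∑ j ∈ Finset.range (n + 1), bp n j x * omega1 f (1 / (n + 1 : ℕ)) :=
        Finset.sum_le_sum fun j hj => mul_le_mul_of_nonneg_left (step j hj) (bp_nonneg n j hx)
    _ = omega1 f (1 / (n + 1 : ℕ)) := by rw [← Finset.sum_mul, sum_range_succ_bp, one_mul]

/-- pointwise estimate for the modified Bernstein operator `B_n^{M,1}`. -/
theorem stmt0 (n : ℕ) (hn : 1 ≤ n) (a0 a1 : ℝ) (ha : 2 * a0 + a1 = 1)
    (f : ℝ → ℝ) (hf : ContinuousOn f (Icc 0 1)) (x : ℝ) (hx : x ∈ Icc (0:ℝ) 1) :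
    |BernM1 a0 a1 n f x - f x| ≤
      |Bern n f x - f x| + |(1 + a1) * (1 / 2 - x)| * omega1 f (1 / n) := by
  obtain ⟨m, rfl⟩ := Nat.exists_eq_add_of_le' hn
  have modification : |BernM1 a0 a1 (m + 1) f x - Bern (m + 1) f x| ≤
      |(1 + a1) * (1 / 2 - x)| * omega1 f (1 / (m + 1 : ℕ)) := by
    rw [BernM1_succ_sub_Bern_succ ha, abs_mul, ← abs_neg, neg_mul_eq_mul_neg, neg_sub]
    exact mul_le_mul_of_nonneg_left (abs_sum_bp_mul_sub_le_omega1 hf m hx) (abs_nonneg _)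
  calc |BernM1 a0 a1 (m + 1) f x - f x|
      = |(Bern (m + 1) f x - f x) + (BernM1 a0 a1 (m + 1) f x - Bern (m + 1) f x)| := by
        ring_nf
    _ ≤ _ := (abs_add_le _ _).trans (add_le_add_right modification _)
end

section
/- Let n ≥ 1, let a_0(n), a_1(n) be real numbers with 2a_0(n) + a_1(n) = 1, let f : [0,1] → ℝ be continuous, and let x ∈ [0,1]. Then n·(B_n^{M,1}(f;x) − B_n(f;x)) = (1 + a_1(n))(1/2 − x) · (B_n f)′(x), where (B_n f)′ denotes the derivative of the polynomial x ↦ B_n(f;x). -/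
open scoped BigOperators
open Set Filter MeasureTheory

/-! Pascal's rule `p_{n+1,k} = (1-x) p_{n,k} + x p_{n,k-1}` and `a_0 = (1 - a_1)/2` give
`p^{M,1}_{n+1,k} - p_{n+1,k} = (1 + a_1)(1/2 - x)(p_{n,k-1} - p_{n,k})`, and `(n+1)` times the last
bracket is the derivative of `p_{n+1,k}`. -/

lemma bp_eq_eval_bernsteinPolynomial (n k : ℕ) (x : ℝ) :
    bp n k x = (bernsteinPolynomial ℝ n k).eval x := by
  simp [bp, bernsteinPolynomial]

lemma hasDerivAt_bp (n k : ℕ) (x : ℝ) :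
    HasDerivAt (bp n k) (n * (bpz (n - 1) ((k : ℤ) - 1) x - bp (n - 1) k x)) x := by
  have h := (bernsteinPolynomial ℝ n k).hasDerivAt x
  rw [← funext (bp_eq_eval_bernsteinPolynomial n k)] at h
  refine h.congr_deriv ?_
  cases k with
  | zero =>
    rw [bernsteinPolynomial.derivative_zero]
    simp [bpz, bp_eq_eval_bernsteinPolynomial]
  | succ k =>
    rw [bernsteinPolynomial.derivative_succ]
    simp [bpz, bp_eq_eval_bernsteinPolynomial]

lemma hasDerivAt_Bern (n : ℕ) (f : ℝ → ℝ) (x : ℝ) :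
    HasDerivAt (Bern n f)
      (∑ k ∈ Finset.range (n + 1),
        n * (bpz (n - 1) ((k : ℤ) - 1) x - bp (n - 1) k x) * f (k / n)) x := by
  unfold Bern
  exact HasDerivAt.fun_sum fun k _ => (hasDerivAt_bp n k x).mul_const _

lemma bpM1_sub_bp {a0 a1 : ℝ} (ha : 2 * a0 + a1 = 1) (n k : ℕ) (x : ℝ) :
    bpM1 a0 a1 (n + 1) k x - bp (n + 1) k x =
      (1 + a1) * (1 / 2 - x) * (bpz n ((k : ℤ) - 1) x - bp n k x) := by
  rw [bpM1, bp_succ, Nat.add_sub_cancel, show a0 = (1 - a1) / 2 by linarith]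
  ring

theorem stmt1_general (n : ℕ) (hn : 1 ≤ n) (a0 a1 : ℝ) (ha : 2 * a0 + a1 = 1)
    (f : ℝ → ℝ) (x : ℝ) :
    (n : ℝ) * (BernM1 a0 a1 n f x - Bern n f x) =
      (1 + a1) * (1 / 2 - x) * deriv (fun y => Bern n f y) x := by
  obtain ⟨m, rfl⟩ : ∃ m, n = m + 1 := ⟨n - 1, by omega⟩
  rw [(hasDerivAt_Bern _ f x).deriv, BernM1, Bern, ← Finset.sum_sub_distrib,
    Finset.mul_sum, Finset.mul_sum]
  refine Finset.sum_congr rfl fun k _ => ?_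
  rw [← sub_mul, bpM1_sub_bp ha, Nat.add_sub_cancel]
  ring

/-- `n (B_n^{M,1} f − B_n f)(x) = (1+a₁(n))(1/2−x)(B_n f)′(x)`. -/
theorem stmt1 (n : ℕ) (hn : 1 ≤ n) (a0 a1 : ℝ) (ha : 2 * a0 + a1 = 1)
    (f : ℝ → ℝ) (hf : ContinuousOn f (Icc 0 1)) (x : ℝ) (hx : x ∈ Icc (0:ℝ) 1) :
    (n : ℝ) * (BernM1 a0 a1 n f x - Bern n f x) =
      (1 + a1) * (1 / 2 - x) * deriv (fun y => Bern n f y) x :=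
  stmt1_general n hn a0 a1 ha f x
end

section
/- Let n ≥ 1 and x ∈ [0,1]. The central moments of the Durrmeyer operator are: D_n(t−x; x) = (1−2x)/(n+2); D_n((t−x)²; x) = 2[x(1−x)(n−3)+1]/((n+2)(n+3)); D_n((t−x)³; x) = 6(1−2x)[2x(1−x)n + 2x² − 2x + 1]/((n+2)(n+3)(n+4)); and D_n((t−x)⁴; x) = 12[x²(1−x)²n² + 3x(1−x)(7x²−7x+2)n − 10x(1−x)(x²−x+1) + 2]/((n+2)(n+3)(n+4)(n+5)), where D_n((t−x)^j; x) denotes D_n applied at x to the function t ↦ (t−x)^j. -/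
open scoped BigOperators
open Set Filter MeasureTheory

/-!
By the beta integral, `(n+1) ∫₀¹ p_{n,k}(t) tʲ dt = (k+1)⋯(k+j) / ((n+2)⋯(n+j+1))`.
Vandermonde's identity gives `(k+1)⋯(k+j) = j! ∑ᵣ C(j,r) C(k,r)`, and `∑ₖ p_{n,k}(x) C(k,r) = C(n,r) xʳ`,
so `D_n(tʲ; x) = j! ∑ᵣ C(j,r) C(n,r) xʳ / ((n+2)⋯(n+j+1))`. The central moments follow by expanding
`(t - x)ʲ` binomially.
-/

open Finset Nat

theorem integral_pow_mul_one_sub_pow (a b : ℕ) :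
    ∫ t in (0:ℝ)..1, t ^ a * (1 - t) ^ b = (a ! * b ! : ℝ) / (a + b + 1)! := by
  induction b generalizing a with
  | zero =>
    simp only [pow_zero, mul_one, integral_pow, factorial_zero, cast_one, add_zero,
      factorial_succ, cast_mul]
    field_simp
    simp
  | succ b ih =>
    have ha : (a : ℝ) + 1 ≠ 0 := by positivity
    have hparts : ∫ t in (0:ℝ)..1, t ^ a * (1 - t) ^ (b + 1)
        = (b + 1) / (a + 1) * ∫ t in (0:ℝ)..1, t ^ (a + 1) * (1 - t) ^ b := by
      simp_rw [mul_comm (_ ^ a)]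
      rw [intervalIntegral.integral_mul_deriv_eq_deriv_mul
        (u' := fun t => -((b + 1) * (1 - t) ^ b)) (v := fun t : ℝ => t ^ (a + 1) / (a + 1))
        (fun t _ => by simpa using ((hasDerivAt_id t).const_sub 1).fun_pow (b + 1))
        (fun t _ => by simpa [ha] using (hasDerivAt_pow (a + 1) t).div_const ((a : ℝ) + 1))
        (Continuous.intervalIntegrable (by fun_prop) _ _)
        (Continuous.intervalIntegrable (by fun_prop) _ _),
        ← intervalIntegral.integral_const_mul]
      simp only [sub_self, zero_pow (succ_ne_zero _), zero_mul, sub_zero, zero_div, mul_zero,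
        zero_sub, neg_mul, intervalIntegral.integral_neg, neg_neg]
      congr 1 with t
      field_simp
    rw [hparts, ih, factorial_succ, factorial_succ b, show a + 1 + b + 1 = a + (b + 1) + 1 by ring]
    push_cast
    field_simp

theorem continuous_bp (n k : ℕ) : Continuous (bp n k) := by
  unfold bp
  fun_prop

theorem sum_bp (n : ℕ) (x : ℝ) : ∑ k ∈ range (n + 1), bp n k x = 1 := by
  have h := (add_pow x (1 - x) n).symm
  rw [add_sub_cancel, one_pow] at h
  rw [← h]
  exact sum_congr rfl fun k _ => by rw [bp]; ring

theorem bp_add_mul_choose (n k r : ℕ) (x : ℝ) :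
    bp n (r + k) x * ((r + k).choose r : ℝ) = n.choose r * x ^ r * bp (n - r) k x := by
  have h := congrArg (Nat.cast (R := ℝ)) (choose_mul (n := n) (le_add_right r k))
  simp only [cast_mul, add_tsub_cancel_left] at h
  rw [bp, bp, show n - (r + k) = n - r - k by omega]
  linear_combination x ^ r * x ^ k * (1 - x) ^ (n - r - k) * h

theorem sum_bp_mul_choose (n r : ℕ) (x : ℝ) :
    ∑ k ∈ range (n + 1), bp n k x * (k.choose r : ℝ) = n.choose r * x ^ r := by
  rcases lt_or_ge n r with hnr | hrn
  · rw [choose_eq_zero_of_lt hnr]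
    simp only [cast_zero, zero_mul]
    exact sum_eq_zero fun k hk =>
      by rw [choose_eq_zero_of_lt ((mem_range_succ_iff.1 hk).trans_lt hnr), cast_zero, mul_zero]
  · rw [show n + 1 = r + (n - r + 1) by omega, sum_range_add,
      sum_eq_zero fun k hk => by rw [choose_eq_zero_of_lt (mem_range.1 hk), cast_zero, mul_zero]]
    simp_rw [zero_add, bp_add_mul_choose, ← mul_sum, sum_bp, mul_one]

theorem Nat.add_choose_eq_sum_choose_mul_choose (k j : ℕ) :
    (k + j).choose j = ∑ r ∈ range (j + 1), k.choose r * j.choose r := by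
  rw [add_choose_eq, Finset.Nat.sum_antidiagonal_eq_sum_range_succ_mk]
  exact sum_congr rfl fun r hr => by rw [choose_symm (mem_range_succ_iff.1 hr)]

theorem mul_integral_bp_mul_pow (n k j : ℕ) (hk : k ≤ n) :
    ((n : ℝ) + 1) * ∫ t in (0:ℝ)..1, bp n k t * t ^ j
      = ((k + 1).ascFactorial j : ℝ) / (n + 2).ascFactorial j := by
  have hbeta : ∫ t in (0:ℝ)..1, bp n k t * t ^ j
      = n.choose k * ((k + j)! * (n - k)! / (n + 1 + j)! : ℝ) := by
    rw [show n + 1 + j = k + j + (n - k) + 1 by omega, ← integral_pow_mul_one_sub_pow,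
      ← intervalIntegral.integral_const_mul]
    congr 1 with t
    rw [bp]
    ring
  have hk' := congrArg (Nat.cast (R := ℝ)) (factorial_mul_ascFactorial k j)
  have hn' := congrArg (Nat.cast (R := ℝ)) (factorial_mul_ascFactorial (n + 1) j)
  have hc := congrArg (Nat.cast (R := ℝ)) (choose_mul_factorial_mul_factorial hk)
  rw [factorial_succ] at hn'
  push_cast at hk' hn' hc
  have hc0 : (n.choose k : ℝ) ≠ 0 := by exact_mod_cast (choose_pos hk).ne'
  rw [hbeta, ← hk', ← hn', ← hc]
  field_simp

theorem dur_sum_mul {ι : Type*} (s : Finset ι) (c : ι → ℝ) (f : ι → ℝ → ℝ)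
    (hf : ∀ i ∈ s, Continuous (f i)) (n : ℕ) (x : ℝ) :
    Dur n (fun t => ∑ i ∈ s, c i * f i t) x = ∑ i ∈ s, c i * Dur n (f i) x := by
  have hint (k : ℕ) : ∫ t in (0:ℝ)..1, bp n k t * ∑ i ∈ s, c i * f i t
      = ∑ i ∈ s, c i * ∫ t in (0:ℝ)..1, bp n k t * f i t := by
    simp_rw [mul_sum]
    rw [intervalIntegral.integral_finsetSum (f := fun i t => bp n k t * (c i * f i t)) fun i hi =>
      ((continuous_bp n k).mul (continuous_const.mul (hf i hi))).intervalIntegrable _ _]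
    refine sum_congr rfl fun i _ => ?_
    rw [← intervalIntegral.integral_const_mul]
    congr 1 with t
    ring
  unfold Dur
  simp_rw [hint, mul_sum]
  rw [sum_comm]
  exact sum_congr rfl fun i _ => sum_congr rfl fun k _ => by ring

theorem dur_sub_pow (n j : ℕ) (x : ℝ) :
    Dur n (fun t => (t - x) ^ j) x
      = ∑ i ∈ range (j + 1), (j.choose i * (-x) ^ (j - i) : ℝ) * Dur n (fun t => t ^ i) x := by
  have h (t : ℝ) : (t - x) ^ j = ∑ i ∈ range (j + 1), (j.choose i * (-x) ^ (j - i) : ℝ) * t ^ i := by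
    rw [sub_eq_add_neg, add_pow]
    exact sum_congr rfl fun i _ => by ring
  simp_rw [h]
  exact dur_sum_mul _ _ _ (fun i _ => continuous_pow i) n x

theorem dur_pow (n j : ℕ) (x : ℝ) :
    Dur n (fun t => t ^ j) x
      = j ! * (∑ r ∈ range (j + 1), (j.choose r * n.choose r : ℝ) * x ^ r)
          / (n + 2).ascFactorial j := by
  have hasc (k : ℕ) : ((k + 1).ascFactorial j : ℝ)
      = j ! * ∑ r ∈ range (j + 1), (j.choose r : ℝ) * k.choose r := by
    rw [ascFactorial_eq_factorial_mul_choose, add_choose_eq_sum_choose_mul_choose]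
    push_cast
    simp_rw [mul_comm]
  calc Dur n (fun t => t ^ j) x
      = (∑ k ∈ range (n + 1), bp n k x * (k + 1).ascFactorial j) / (n + 2).ascFactorial j := by
        rw [Dur, mul_sum, sum_div]
        refine sum_congr rfl fun k hk => ?_
        rw [mul_left_comm, mul_integral_bp_mul_pow n k j (mem_range_succ_iff.1 hk), mul_div_assoc]
    _ = j ! * (∑ r ∈ range (j + 1), j.choose r * ∑ k ∈ range (n + 1), bp n k x * k.choose r)
          / (n + 2).ascFactorial j := by
        simp_rw [hasc, mul_sum, sum_comm (s := range (n + 1))]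
        exact congrArg (· / _) (sum_congr rfl fun r _ => sum_congr rfl fun k _ => by ring)
    _ = _ := by simp_rw [sum_bp_mul_choose, mul_assoc]

theorem stmt12_general (n : ℕ) (x : ℝ) :
    Dur n (fun t => t - x) x = (1 - 2 * x) / ((n : ℝ) + 2) ∧
    Dur n (fun t => (t - x) ^ 2) x =
      2 * (x * (1 - x) * ((n : ℝ) - 3) + 1) / (((n : ℝ) + 2) * ((n : ℝ) + 3)) ∧
    Dur n (fun t => (t - x) ^ 3) x =
      6 * (1 - 2 * x) * (2 * x * (1 - x) * (n : ℝ) + 2 * x ^ 2 - 2 * x + 1) /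
        (((n : ℝ) + 2) * ((n : ℝ) + 3) * ((n : ℝ) + 4)) ∧
    Dur n (fun t => (t - x) ^ 4) x =
      12 * (x ^ 2 * (1 - x) ^ 2 * (n : ℝ) ^ 2
          + 3 * x * (1 - x) * (7 * x ^ 2 - 7 * x + 2) * (n : ℝ)
          - 10 * x * (1 - x) * (x ^ 2 - x + 1) + 2) /
        (((n : ℝ) + 2) * ((n : ℝ) + 3) * ((n : ℝ) + 4) * ((n : ℝ) + 5)) := by
  have hmoment (j : ℕ) : Dur n (fun t => (t - x) ^ j) x
      = ∑ i ∈ range (j + 1), (j.choose i * (-x) ^ (j - i) : ℝ) *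
          (i ! * (∑ r ∈ range (i + 1), (i.choose r * n.choose r : ℝ) * x ^ r)
            / (n + 2).ascFactorial i) := by
    simp_rw [dur_sub_pow, dur_pow]
  have h1 := hmoment 1
  simp only [pow_one] at h1
  refine ⟨h1.trans ?_, (hmoment 2).trans ?_, (hmoment 3).trans ?_, (hmoment 4).trans ?_⟩ <;>
  · simp only [sum_range_succ, sum_range_zero, ascFactorial_succ, ascFactorial_zero,
      cast_choose_eq_descPochhammer_div ℝ n, descPochhammer_succ_eval, descPochhammer_zero]
    norm_num [Nat.choose, Nat.factorial]
    field_simp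
    ring

/-- central moments of the Durrmeyer operator. -/
theorem stmt12 (n : ℕ) (hn : 1 ≤ n) (x : ℝ) (hx : x ∈ Icc (0:ℝ) 1) :
    Dur n (fun t => t - x) x = (1 - 2 * x) / ((n : ℝ) + 2) ∧
    Dur n (fun t => (t - x) ^ 2) x =
      2 * (x * (1 - x) * ((n : ℝ) - 3) + 1) / (((n : ℝ) + 2) * ((n : ℝ) + 3)) ∧
    Dur n (fun t => (t - x) ^ 3) x =
      6 * (1 - 2 * x) * (2 * x * (1 - x) * (n : ℝ) + 2 * x ^ 2 - 2 * x + 1) /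
        (((n : ℝ) + 2) * ((n : ℝ) + 3) * ((n : ℝ) + 4)) ∧
    Dur n (fun t => (t - x) ^ 4) x =
      12 * (x ^ 2 * (1 - x) ^ 2 * (n : ℝ) ^ 2
          + 3 * x * (1 - x) * (7 * x ^ 2 - 7 * x + 2) * (n : ℝ)
          - 10 * x * (1 - x) * (x ^ 2 - x + 1) + 2) /
        (((n : ℝ) + 2) * ((n : ℝ) + 3) * ((n : ℝ) + 4) * ((n : ℝ) + 5)) :=
  stmt12_general n x
end
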